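/- arXiv:1708.04046 — 2 statements merged into one kernel-verified Lean document; each statement's English description precedes it below -/
import Mathlib

section
/- Let C₁, C₂, C₁', C₂' be pretriangulated categories and let i₁ : C₁' ⥤ C₁, i₂ : C₂' ⥤ C₂, G : C₂ ⥤ C₁, G' : C₂' ⥤ C₁', F : C₁ ⥤ C₂, F' : C₁' ⥤ C₂' be triangulated (exact) functors, together with natural isomorphisms G ∘ i₂ ≅ i₁ ∘ G' and F ∘ i₁ ≅ i₂ ∘ F', and adjunctions F ⊣ G and F' ⊣ G'. Assume that F and F' are fully faithful. Let c₁ be an object of C₁ such that the pointwise left adjoint of i₂ is defined at F(c₁), with value c₂' ∈ C₂'. Then: (1) the counit morphism F'(G'(c₂')) → c₂' is an isomorphism; (2) the pointwise left adjoint of i₁ is defined at c₁, with value G'(c₂'); in particular F' applied to this value is isomorphic to c₂' = (i₂)^L(F(c₁)). -/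
/-!
Since `F'` is fully faithful, `G'` inverts the counit `ε : F'G'c₂' ⟶ c₂'`, so the cone `z` of `ε`
is killed by the triangulated functor `G'`. Then `Hom(F'X, z) = Hom(X, G'z) = 0` for all `X`, and
`Hom(c₂', z) ≅ Hom(F c₁, i₂ z) ≅ Hom(c₁, G i₂ z) ≅ Hom(c₁, i₁ G' z) = 0`. The long exact sequence
of the triangle `F'G'c₂' ⟶ c₂' ⟶ z ⟶ (F'G'c₂')⟦1⟧` now forces `𝟙 z = 0`, so `ε` is an
isomorphism. Once `c₂' ≅ F'G'c₂'`, the corepresentation of `i₂ ⋙ Hom(F c₁, -)` by `c₂'` restricts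
along `F'` and, by full faithfulness of `F` and `F'`, becomes a corepresentation of
`i₁ ⋙ Hom(c₁, -)` by `G'c₂'`.
-/

open CategoryTheory Opposite Limits Pretriangulated

universe u v

namespace CategoryTheory

def Functor.FullyFaithful.compCoyonedaObjIso {C D : Type*} [Category.{v} C] [Category.{v} D]
    {F : C ⥤ D} (hF : F.FullyFaithful) (X : C) :
    F ⋙ coyoneda.obj (op (F.obj X)) ≅ coyoneda.obj (op X) :=
  NatIso.ofComponents (fun _ => hF.homEquiv.symm.toIso)
    (fun _ => by ext; exact hF.map_injective (by simp))

lemma Adjunction.subsingleton_hom_of_isZero {C D : Type*} [Category C] [Category D]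
    {L : C ⥤ D} {R : D ⥤ C} (adj : L ⊣ R) (X : C) {Z : D} (hZ : IsZero (R.obj Z)) :
    Subsingleton (L.obj X ⟶ Z) :=
  ⟨fun _ _ => (adj.homEquiv X Z).injective (hZ.eq_of_tgt _ _)⟩

lemma Pretriangulated.Triangle.isZero₃_of_subsingleton_hom {C : Type*} [Category C]
    [HasZeroObject C] [HasShift C ℤ] [Preadditive C]
    [∀ n : ℤ, (CategoryTheory.shiftFunctor C n).Additive] [Pretriangulated C]
    (T : Triangle C) (hT : T ∈ distTriang C)
    [Subsingleton (T.obj₂ ⟶ T.obj₃)] [Subsingleton (T.obj₁⟦(1 : ℤ)⟧ ⟶ T.obj₃)] :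
    IsZero T.obj₃ := by
  rw [IsZero.iff_id_eq_zero]
  obtain ⟨ψ, hψ⟩ := T.yoneda_exact₃ hT (𝟙 _) (Subsingleton.elim _ _)
  rw [hψ, Subsingleton.elim ψ 0, comp_zero]

lemma Adjunction.isIso_counit_app_of_subsingleton_hom {C D : Type*} [Category C] [Category D]
    [HasZeroObject C] [HasShift C ℤ] [Preadditive C] [∀ n : ℤ, (shiftFunctor C n).Additive]
    [Pretriangulated C] [HasZeroObject D] [HasShift D ℤ] [Preadditive D]
    [∀ n : ℤ, (shiftFunctor D n).Additive] [Pretriangulated D]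
    {L : C ⥤ D} {R : D ⥤ C} (adj : L ⊣ R) [L.CommShift ℤ] [R.CommShift ℤ] [R.IsTriangulated]
    [L.Full] [L.Faithful] (Y : D) (hY : ∀ Z : D, IsZero (R.obj Z) → Subsingleton (Y ⟶ Z)) :
    IsIso (adj.counit.app Y) := by
  obtain ⟨Z, g, h, hT⟩ := distinguished_cocone_triangle (adj.counit.app Y)
  set T := Triangle.mk (adj.counit.app Y) g h
  have hRZ : IsZero (R.obj Z) :=
    Triangle.isZero₃_of_isIso₁ _ (R.map_distinguished T hT)
      (inferInstanceAs (IsIso (R.map (adj.counit.app Y))))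
  have : Subsingleton (T.obj₂ ⟶ T.obj₃) := hY Z hRZ
  have : Subsingleton (T.obj₁⟦(1 : ℤ)⟧ ⟶ T.obj₃) :=
    have := adj.subsingleton_hom_of_isZero ((R.obj Y)⟦(1 : ℤ)⟧) hRZ
    Equiv.subsingleton (β := L.obj ((R.obj Y)⟦(1 : ℤ)⟧) ⟶ Z)
      (((L.commShiftIso (1 : ℤ)).app (R.obj Y)).homCongr (Iso.refl Z)).symm
  exact (Triangle.isZero₃_iff_isIso₁ T hT).1 (T.isZero₃_of_subsingleton_hom hT)

section CommSq

variable {C₁ C₂ C₁' C₂' : Type*} [Category.{v} C₁] [Category.{v} C₂] [Category.{v} C₁']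
  [Category.{v} C₂'] {i₁ : C₁' ⥤ C₁} {i₂ : C₂' ⥤ C₂} {F : C₁ ⥤ C₂} {c₁ : C₁} {c₂' : C₂'}

lemma subsingleton_hom_of_isZero_of_coyoneda_iso [HasZeroMorphisms C₁] [HasZeroMorphisms C₁']
    [i₁.PreservesZeroMorphisms] {G : C₂ ⥤ C₁} {G' : C₂' ⥤ C₁'} (sqG : i₂ ⋙ G ≅ G' ⋙ i₁)
    (adj : F ⊣ G) (hdef : coyoneda.obj (op c₂') ≅ i₂ ⋙ coyoneda.obj (op (F.obj c₁)))
    {z : C₂'} (hz : IsZero (G'.obj z)) : Subsingleton (c₂' ⟶ z) :=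
  have := adj.subsingleton_hom_of_isZero c₁ ((i₁.map_isZero hz).of_iso (sqG.app z))
  Equiv.subsingleton (β := F.obj c₁ ⟶ i₂.obj z) (hdef.app z).toEquiv

def coyonedaIsoOfCommSq {F' : C₁' ⥤ C₂'} (sqF : i₁ ⋙ F ≅ F' ⋙ i₂) (hF : F.FullyFaithful)
    (hF' : F'.FullyFaithful) {d : C₁'} (e : F'.obj d ≅ c₂')
    (hdef : coyoneda.obj (op c₂') ≅ i₂ ⋙ coyoneda.obj (op (F.obj c₁))) :
    coyoneda.obj (op d) ≅ i₁ ⋙ coyoneda.obj (op c₁) :=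
  (hF'.compCoyonedaObjIso d).symm ≪≫ Functor.isoWhiskerLeft F' (coyoneda.mapIso e.symm.op) ≪≫
    Functor.isoWhiskerLeft F' hdef ≪≫ (Functor.associator _ _ _).symm ≪≫
    Functor.isoWhiskerRight sqF.symm _ ≪≫ Functor.associator _ _ _ ≪≫
    Functor.isoWhiskerLeft i₁ (hF.compCoyonedaObjIso c₁)

end CommSq

end CategoryTheory

/-- the unnumbered Proposition of Section 1.2 of the paper, in the
pretriangulated setting.
Given a commuting square of triangulated functors between pretriangulated categories,
with `F ⊣ G`, `F' ⊣ G'`, `F` and `F'` fully faithful, and an object `c₁ : C₁` at which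
the pointwise left adjoint of `i₂` is defined at `F c₁` with value `c₂'`, then:
(1) the counit `F'(G'(c₂')) → c₂'` is an isomorphism;
(2) the pointwise left adjoint of `i₁` is defined at `c₁` with value `G'(c₂')`;
in particular `F'` applied to this value is isomorphic to `c₂'`. -/
theorem pointwise_left_adjoint_descends
    {C₁ C₂ C₁' C₂' : Type u}
    [Category.{v} C₁] [Category.{v} C₂] [Category.{v} C₁'] [Category.{v} C₂']
    [HasZeroObject C₁] [HasZeroObject C₂] [HasZeroObject C₁'] [HasZeroObject C₂']
    [Preadditive C₁] [Preadditive C₂] [Preadditive C₁'] [Preadditive C₂']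
    [HasShift C₁ ℤ] [HasShift C₂ ℤ] [HasShift C₁' ℤ] [HasShift C₂' ℤ]
    [∀ n : ℤ, (shiftFunctor C₁ n).Additive] [∀ n : ℤ, (shiftFunctor C₂ n).Additive]
    [∀ n : ℤ, (shiftFunctor C₁' n).Additive] [∀ n : ℤ, (shiftFunctor C₂' n).Additive]
    [Pretriangulated C₁] [Pretriangulated C₂] [Pretriangulated C₁'] [Pretriangulated C₂']
    (i₁ : C₁' ⥤ C₁) (i₂ : C₂' ⥤ C₂) (G : C₂ ⥤ C₁) (G' : C₂' ⥤ C₁')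
    (F : C₁ ⥤ C₂) (F' : C₁' ⥤ C₂')
    [i₁.CommShift ℤ] [i₂.CommShift ℤ] [G.CommShift ℤ] [G'.CommShift ℤ]
    [F.CommShift ℤ] [F'.CommShift ℤ]
    [i₁.IsTriangulated] [i₂.IsTriangulated] [G.IsTriangulated] [G'.IsTriangulated]
    [F.IsTriangulated] [F'.IsTriangulated]
    (sqG : i₂ ⋙ G ≅ G' ⋙ i₁) (sqF : i₁ ⋙ F ≅ F' ⋙ i₂)
    (adj : F ⊣ G) (adj' : F' ⊣ G')
    [F.Full] [F.Faithful] [F'.Full] [F'.Faithful]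
    (c₁ : C₁) (c₂' : C₂')
    (hdef : coyoneda.obj (op c₂') ≅ i₂ ⋙ coyoneda.obj (op (F.obj c₁))) :
    IsIso (adj'.counit.app c₂') ∧
      Nonempty (coyoneda.obj (op (G'.obj c₂')) ≅ i₁ ⋙ coyoneda.obj (op c₁)) ∧
      Nonempty (F'.obj (G'.obj c₂') ≅ c₂') := by
  have : IsIso (adj'.counit.app c₂') := adj'.isIso_counit_app_of_subsingleton_hom c₂'
    fun _ => subsingleton_hom_of_isZero_of_coyoneda_iso sqG adj hdef
  exact ⟨inferInstance, ⟨coyonedaIsoOfCommSq sqF (.ofFullyFaithful F) (.ofFullyFaithful F')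
    (asIso (adj'.counit.app c₂')) hdef⟩, ⟨asIso (adj'.counit.app c₂')⟩⟩
end

section
/- Let D and E be pretriangulated categories, let F' : D ⥤ E and G' : E ⥤ D be triangulated (exact) functors with an adjunction F' ⊣ G', and assume that F' is fully faithful. Let z be an object of E and let c̃ be a cone of the counit morphism ε_z : F'(G'(z)) → z, i.e. an object fitting into a distinguished triangle F'(G'(z)) → z → c̃ → F'(G'(z))[1]. Then: (1) G'(c̃) is a zero object of D; (2) if moreover the abelian group Hom_E(z, c̃) is zero, then c̃ is a zero object of E and the counit ε_z : F'(G'(z)) → z is an isomorphism. -/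
/-! Applying `G'` to the triangle kills the cone, since `G'(ε_z)` is an isomorphism. If moreover
`z ⟶ c̃` vanishes, the triangle exhibits `c̃` as a retract of `F'(G'z)[1] ≅ F'(G'z[1])`, and maps
from the latter to `c̃` correspond by adjunction to maps into `G'(c̃) = 0`. -/

open CategoryTheory Opposite Limits Pretriangulated

namespace CategoryTheory

lemma Pretriangulated.Triangle.isZero₃_of_mor₂_eq_zero {C : Type*} [Category C]
    [Preadditive C] [HasZeroObject C] [HasShift C ℤ]
    [∀ n : ℤ, (CategoryTheory.shiftFunctor C n).Additive] [Pretriangulated C]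
    (T : Triangle C) (hT : T ∈ distTriang C) (h₂ : T.mor₂ = 0)
    (h : ∀ f : T.obj₁⟦(1 : ℤ)⟧ ⟶ T.obj₃, f = 0) : IsZero T.obj₃ := by
  obtain ⟨r, hr⟩ := Triangle.yoneda_exact₃ T hT (𝟙 T.obj₃) (by rw [Category.comp_id, h₂])
  rw [IsZero.iff_id_eq_zero, hr, h r, comp_zero]

namespace Adjunction

variable {C D : Type*} [Category C] [Category D] {F : C ⥤ D} {G : D ⥤ C}

lemma subsingleton_hom_of_isZero_s4 (adj : F ⊣ G) {Y : D} (hY : IsZero (G.obj Y)) (X : C) :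
    Subsingleton (F.obj X ⟶ Y) :=
  (adj.homEquiv X Y).subsingleton_congr.2 ⟨hY.eq_of_tgt⟩

lemma shift_hom_eq_zero_of_isZero [HasShift C ℤ] [HasShift D ℤ] [Preadditive D]
    [F.CommShift ℤ] (adj : F ⊣ G) {Y : D} (hY : IsZero (G.obj Y)) (X : C) (n : ℤ)
    (f : (F.obj X)⟦n⟧ ⟶ Y) : f = 0 := by
  have := adj.subsingleton_hom_of_isZero_s4 hY (X⟦n⟧)
  exact (cancel_epi ((F.commShiftIso n).app X).hom).1
    (Subsingleton.elim (α := F.obj (X⟦n⟧) ⟶ Y) _ _)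

end Adjunction

end CategoryTheory

/-- key mechanism in the proof of the unnumbered Proposition of
Section 1.2 of the paper.
Let `F' : D ⥤ E` and `G' : E ⥤ D` be triangulated functors between pretriangulated
categories with an adjunction `F' ⊣ G'`, and suppose `F'` is fully faithful. Let
`ctilde` be a cone of the counit `ε_z : F'(G'(z)) → z`. Then `G'(ctilde)` is a zero object,
and if moreover every morphism `z ⟶ ctilde` is zero, then `ctilde` is a zero object and
the counit `ε_z` is an isomorphism. -/
theorem cone_of_counit_vanishes
    {D E : Type u} [Category.{v} D] [Category.{v} E]
    [HasZeroObject D] [HasZeroObject E]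
    [Preadditive D] [Preadditive E]
    [HasShift D ℤ] [HasShift E ℤ]
    [∀ n : ℤ, (shiftFunctor D n).Additive] [∀ n : ℤ, (shiftFunctor E n).Additive]
    [Pretriangulated D] [Pretriangulated E]
    (F' : D ⥤ E) (G' : E ⥤ D)
    [F'.CommShift ℤ] [G'.CommShift ℤ]
    [F'.IsTriangulated] [G'.IsTriangulated]
    (adj : F' ⊣ G')
    [F'.Full] [F'.Faithful]
    (z : E) (ctilde : E)
    (g : z ⟶ ctilde) (h : ctilde ⟶ (F'.obj (G'.obj z))⟦(1 : ℤ)⟧)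
    (hT : Triangle.mk (adj.counit.app z) g h ∈ distTriang E) :
    IsZero (G'.obj ctilde) ∧
      ((∀ f : z ⟶ ctilde, f = 0) → (IsZero ctilde ∧ IsIso (adj.counit.app z))) := by
  -- `G'(ε_z)` is invertible because `F'` is fully faithful
  have hG : IsZero (G'.obj ctilde) :=
    Triangle.isZero₃_of_isIso₁ _ (G'.map_distinguished _ hT)
      (inferInstanceAs (IsIso (G'.map (adj.counit.app z))))
  refine ⟨hG, fun hz => ?_⟩
  have hc : IsZero ctilde :=
    Triangle.isZero₃_of_mor₂_eq_zero _ hT (hz g) (adj.shift_hom_eq_zero_of_isZero hG _ 1)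
  exact ⟨hc, (Triangle.isZero₃_iff_isIso₁ _ hT).1 hc⟩
end
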